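/- Let H be a Hilbert space, U ⊆ H a nonempty closed convex set, a : H × H → ℝ a continuous symmetric coercive bilinear form, and ℓ : H → ℝ a continuous linear form. Then the variational inequality: find u ∈ U with a(u, v − u) ≥ ℓ(v − u) for all v ∈ U, has one and only one solution, and u is the unique minimizer over U of J(v) := (1/2)a(v,v) − ℓ(v). -/

import Mathlib

/-! The energy `J v = ½ a v v - ℓ v` satisfies the midpoint identity
`(J u + J v) / 2 - J ((u + v) / 2) = a (u - v) (u - v) / 8 ≥ c ‖u - v‖² / 8`.
Hence every minimizing sequence in `U` is Cauchy, its limit minimizes `J` on `U`, and the same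
identity makes the minimizer unique. The variational inequality is the first-order condition at
the minimizer, because `a` is symmetric and so `DJ(u) = a u - ℓ`. -/

open Filter Topology Set

section MidpointGap

variable {E : Type*} [NormedAddCommGroup E] [Module ℝ E] {f : E → ℝ} {U : Set E} {c : ℝ}

theorem eq_of_isMinOn_of_midpoint_gap (hc : 0 < c) (hU : Convex ℝ U)
    (hgap : ∀ u ∈ U, ∀ v ∈ U, c / 8 * ‖u - v‖ ^ 2 ≤ (f u + f v) / 2 - f (midpoint ℝ u v))
    {w v : E} (hw : w ∈ U) (hmin : IsMinOn f U w) (hv : v ∈ U) (hfv : f v ≤ f w) : v = w := by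
  have hmid : f w ≤ f (midpoint ℝ v w) := isMinOn_iff.1 hmin _ (hU.midpoint_mem hv hw)
  have hsq : ‖v - w‖ ^ 2 ≤ 0 := by
    have := hgap v hv w hw
    nlinarith
  rw [← sub_eq_zero, ← norm_eq_zero]
  exact pow_eq_zero_iff two_ne_zero |>.1 (le_antisymm hsq (sq_nonneg _))

theorem exists_isMinOn_of_midpoint_gap [CompleteSpace E] (hc : 0 < c) (hne : U.Nonempty)
    (hcl : IsClosed U) (hU : Convex ℝ U) (hf : ContinuousOn f U) (hbdd : BddBelow (f '' U))
    (hgap : ∀ u ∈ U, ∀ v ∈ U, c / 8 * ‖u - v‖ ^ 2 ≤ (f u + f v) / 2 - f (midpoint ℝ u v)) :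
    ∃ w ∈ U, IsMinOn f U w := by
  obtain ⟨y, hy_anti, hy_lim, hy_mem⟩ := exists_seq_tendsto_sInf (hne.image f) hbdd
  set m := sInf (f '' U)
  have hm : ∀ v ∈ U, m ≤ f v := fun v hv => csInf_le hbdd (mem_image_of_mem f hv)
  choose x hxU hfx using hy_mem
  have hdist : ∀ n k N, N ≤ n → N ≤ k → dist (x n) (x k) ≤ √(8 / c * (y N - m)) := by
    intro n k N hn hk
    rw [dist_eq_norm]
    apply Real.le_sqrt_of_sq_le
    have hgap_nk := hgap _ (hxU n) _ (hxU k)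
    have hm_mid := hm _ (hU.midpoint_mem (hxU n) (hxU k))
    rw [hfx, hfx] at hgap_nk
    rw [div_mul_eq_mul_div, le_div_iff₀ hc]
    nlinarith [hy_anti hn, hy_anti hk]
  have hbound : Tendsto (fun N => √(8 / c * (y N - m))) atTop (𝓝 0) := by
    simpa using ((hy_lim.sub_const m).const_mul (8 / c)).sqrt
  obtain ⟨w, hw⟩ := cauchySeq_tendsto_of_complete (cauchySeq_of_le_tendsto_0 _ hdist hbound)
  have hwU : w ∈ U := hcl.mem_of_tendsto hw (Eventually.of_forall hxU)
  have hfw : f w = m := by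
    have hxw : Tendsto x atTop (𝓝[U] w) := tendsto_nhdsWithin_iff.2 ⟨hw, .of_forall hxU⟩
    refine tendsto_nhds_unique ((hf w hwU).tendsto.comp hxw) ?_
    simpa only [Function.comp_def, hfx] using hy_lim
  exact ⟨w, hwU, isMinOn_iff.2 fun v hv => hfw ▸ hm v hv⟩

end MidpointGap

section Energy

variable {E : Type*} [NormedAddCommGroup E] [NormedSpace ℝ E]
  (a : E →L[ℝ] E →L[ℝ] ℝ) (ℓ : E →L[ℝ] ℝ)

noncomputable def energy (v : E) : ℝ := 1 / 2 * a v v - ℓ v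

theorem continuous_energy : Continuous (energy a ℓ) := by
  unfold energy
  fun_prop

theorem energy_midpoint (u v : E) :
    (energy a ℓ u + energy a ℓ v) / 2 - energy a ℓ (midpoint ℝ u v) =
      1 / 8 * a (u - v) (u - v) := by
  simp only [energy, midpoint_eq_smul_add, invOf_eq_inv, map_add, map_sub, map_smul,
    add_apply, sub_apply, smul_apply, smul_eq_mul]
  ring

variable {a ℓ} {c : ℝ}

theorem midpoint_gap_energy (hcoer : ∀ v, c * ‖v‖ ^ 2 ≤ a v v) (u v : E) :
    c / 8 * ‖u - v‖ ^ 2 ≤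
      (energy a ℓ u + energy a ℓ v) / 2 - energy a ℓ (midpoint ℝ u v) := by
  rw [energy_midpoint]
  linarith [hcoer (u - v)]

theorem neg_sq_opNorm_div_le_energy (hc : 0 < c) (hcoer : ∀ v, c * ‖v‖ ^ 2 ≤ a v v) (v : E) :
    -(‖ℓ‖ ^ 2 / (2 * c)) ≤ energy a ℓ v := by
  have hℓv : ℓ v ≤ ‖ℓ‖ * ‖v‖ := (le_abs_self _).trans (ℓ.le_opNorm v)
  have hyoung : ‖ℓ‖ * ‖v‖ - c / 2 * ‖v‖ ^ 2 ≤ ‖ℓ‖ ^ 2 / (2 * c) := by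
    rw [le_div_iff₀ (by positivity)]
    nlinarith [sq_nonneg (c * ‖v‖ - ‖ℓ‖)]
  unfold energy
  linarith [hcoer v]

theorem hasFDerivAt_energy (hsym : ∀ u v, a u v = a v u) (w : E) :
    HasFDerivAt (energy a ℓ) (a w - ℓ) w := by
  have hquad := a.hasFDerivAt_of_bilinear (hasFDerivAt_id w) (hasFDerivAt_id w)
  refine ((hquad.const_mul (1 / 2 : ℝ)).sub ℓ.hasFDerivAt).congr_fderiv ?_
  ext z
  simp only [one_div, id_eq, ContinuousLinearMap.precompR_apply, ContinuousLinearMap.compL_apply,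
    ContinuousLinearMap.comp_id, smul_add, sub_apply, add_apply, smul_apply, smul_eq_mul,
    ContinuousLinearMap.precompL_apply, ContinuousLinearMap.id_apply, hsym z w, sub_left_inj]
  ring

theorem IsMinOn.energy_variationalInequality {U : Set E} {w v : E} (hsym : ∀ u v, a u v = a v u)
    (hU : Convex ℝ U) (hmin : IsMinOn (energy a ℓ) U w) (hw : w ∈ U) (hv : v ∈ U) :
    ℓ (v - w) ≤ a w (v - w) := by
  have h := hmin.localize.hasFDerivWithinAt_nonneg (hasFDerivAt_energy hsym w).hasFDerivWithinAt
    (sub_mem_posTangentConeAt_of_segment_subset (hU.segment_subset hw hv))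
  simpa using h

end Energy

/-- Lions–Stampacchia: for a continuous symmetric coercive bilinear form `a`, a continuous
linear form `ℓ` and a nonempty closed convex set `U` in a Hilbert space, the variational
inequality `a(u, v − u) ≥ ℓ(v − u)` for all `v ∈ U` has a unique solution `u ∈ U`, and `u`
is the unique minimizer over `U` of `J(v) = (1/2) a(v,v) − ℓ(v)`. -/
theorem stmt9 (H : Type*) [NormedAddCommGroup H] [InnerProductSpace ℝ H] [CompleteSpace H]
    (U : Set H) (hne : U.Nonempty) (hcl : IsClosed U) (hcv : Convex ℝ U)
    (a : H →L[ℝ] H →L[ℝ] ℝ) (hsym : ∀ u v, a u v = a v u)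
    (c : ℝ) (hc : 0 < c) (hcoer : ∀ v, c * ‖v‖ ^ 2 ≤ a v v)
    (ℓ : H →L[ℝ] ℝ) :
    ∃! u, u ∈ U ∧ (∀ v ∈ U, ℓ (v - u) ≤ a u (v - u)) ∧
      (∀ v ∈ U, (1 / 2) * a u u - ℓ u ≤ (1 / 2) * a v v - ℓ v) ∧
      (∀ v ∈ U, (1 / 2) * a v v - ℓ v = (1 / 2) * a u u - ℓ u → v = u) := by
  have hgap : ∀ u ∈ U, ∀ v ∈ U, c / 8 * ‖u - v‖ ^ 2 ≤
      (energy a ℓ u + energy a ℓ v) / 2 - energy a ℓ (midpoint ℝ u v) :=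
    fun u _ v _ => midpoint_gap_energy hcoer u v
  have hbdd : BddBelow (energy a ℓ '' U) :=
    ⟨_, forall_mem_image.2 fun v _ => neg_sq_opNorm_div_le_energy hc hcoer v⟩
  obtain ⟨w, hwU, hmin⟩ := exists_isMinOn_of_midpoint_gap hc hne hcl hcv
    (continuous_energy a ℓ).continuousOn hbdd hgap
  have huniq : ∀ v ∈ U, energy a ℓ v ≤ energy a ℓ w → v = w :=
    fun v hv => eq_of_isMinOn_of_midpoint_gap hc hcv hgap hwU hmin hv
  refine ⟨w, ⟨hwU, fun v hv => hmin.energy_variationalInequality hsym hcv hwU hv,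
    fun v hv => isMinOn_iff.1 hmin v hv, fun v hv h => huniq v hv h.le⟩, ?_⟩
  rintro y ⟨hyU, -, hymin, -⟩
  exact huniq y hyU (hymin w hwU)
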